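/- Let M ∈ ℝ^{m×n} be a real matrix with reduced SVD M = UΣVᵀ. Then (M Mᵀ)^{1/4} · U Vᵀ · (Mᵀ M)^{1/4} = M. Consequently, for any invertible matrices L ∈ ℝ^{m×m} and R ∈ ℝ^{n×n} and any real power p for which L^{−p} and R^{−p} are defined, the Shampoo update decomposes as L^{−p} M R^{−p} = [L^{−p}(M Mᵀ)^{1/4}] · U Vᵀ · [(Mᵀ M)^{1/4} R^{−p}], i.e. as the polar factor of M multiplied on the left and right by adaptation matrices. -/

import Mathlib

open Matrix

namespace Matrix.PosSemidef

open scoped ComplexOrder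

/-- The positive semidefinite square root of a positive semidefinite matrix
(the definition Mathlib had in December 2024, since removed). -/
noncomputable def sqrt {n : Type*} [Fintype n] [DecidableEq n] {𝕜 : Type*} [RCLike 𝕜]
    {A : Matrix n n 𝕜} (hA : A.PosSemidef) : Matrix n n 𝕜 :=
  hA.1.eigenvectorUnitary.1 * diagonal ((↑) ∘ (√·) ∘ hA.1.eigenvalues) *
    (star hA.1.eigenvectorUnitary : Matrix n n 𝕜)

lemma posSemidef_sqrt {n : Type*} [Fintype n] [DecidableEq n] {𝕜 : Type*} [RCLike 𝕜]
    {A : Matrix n n 𝕜} (hA : A.PosSemidef) : PosSemidef hA.sqrt := by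
  unfold sqrt
  have h : (star hA.1.eigenvectorUnitary : Matrix n n 𝕜) = (hA.1.eigenvectorUnitary.1)ᴴ := rfl
  rw [h]
  apply PosSemidef.mul_mul_conjTranspose_same
  refine posSemidef_diagonal_iff.mpr fun i ↦ ?_
  rw [Function.comp_apply, RCLike.nonneg_iff]
  constructor
  · simp only [Function.comp_apply, RCLike.ofReal_re]
    exact Real.sqrt_nonneg _
  · simp only [Function.comp_apply, RCLike.ofReal_im]

end Matrix.PosSemidef

open scoped MatrixOrder in
lemma aux_sqrt_eq_cfc {a : ℕ} {P : Matrix (Fin a) (Fin a) ℝ} (hP : P.PosSemidef) :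
    hP.sqrt = CFC.sqrt P := by
  rw [CFC.sqrt_eq_cfc, cfc_nnreal_eq_real _ P, hP.1.cfc_eq]
  simp only [IsHermitian.cfc, PosSemidef.sqrt, Unitary.conjStarAlgAut_apply]
  congr 3
  funext i
  simp [max_eq_left (hP.eigenvalues_nonneg i)]

lemma aux_cancel {a k : ℕ} {W : Matrix (Fin a) (Fin k) ℝ} (hW : Wᵀ * W = 1)
    {b : ℕ} (A : Matrix (Fin k) (Fin b) ℝ) : Wᵀ * (W * A) = A := by
  rw [← Matrix.mul_assoc, hW, Matrix.one_mul]

lemma aux_psd {a k : ℕ} (W : Matrix (Fin a) (Fin k) ℝ)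
    (d : Fin k → ℝ) (hd : ∀ i, 0 ≤ d i) :
    (W * Matrix.diagonal d * Wᵀ).PosSemidef := by
  have : W * Matrix.diagonal d * Wᵀ =
      (W * Matrix.diagonal (fun i => Real.sqrt (d i))) *
      (W * Matrix.diagonal (fun i => Real.sqrt (d i)))ᴴ := by
    rw [conjTranspose_eq_transpose_of_trivial, transpose_mul, diagonal_transpose]
    simp only [Matrix.mul_assoc]
    rw [← Matrix.mul_assoc (Matrix.diagonal _) (Matrix.diagonal _), diagonal_mul_diagonal,
      show (fun i => Real.sqrt (d i) * Real.sqrt (d i)) = d from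
        funext fun i => Real.mul_self_sqrt (hd i)]
  rw [this]
  exact posSemidef_self_mul_conjTranspose _

open scoped MatrixOrder in
lemma aux_sqrt {a k : ℕ} (W : Matrix (Fin a) (Fin k) ℝ) (hW : Wᵀ * W = 1)
    (d : Fin k → ℝ) (hd : ∀ i, 0 ≤ d i) {P : Matrix (Fin a) (Fin a) ℝ}
    (hP : P.PosSemidef)
    (h : W * Matrix.diagonal (fun i => d i * d i) * Wᵀ = P) :
    hP.sqrt = W * Matrix.diagonal d * Wᵀ := by
  rw [aux_sqrt_eq_cfc]
  refine CFC.sqrt_unique ?_ (aux_psd W d hd).nonneg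
  rw [← h]
  simp only [Matrix.mul_assoc]
  rw [aux_cancel hW, ← Matrix.mul_assoc (Matrix.diagonal d) (Matrix.diagonal d),
    diagonal_mul_diagonal]

/-- **Decomposition of the Shampoo update into an adapted Muon update.**
Let `M ∈ ℝ^{m×n}` have reduced SVD `M = U Σ Vᵀ`.  Then
`(M Mᵀ)^{1/4} · U Vᵀ · (Mᵀ M)^{1/4} = M`, where `P^{1/4} = (P^{1/2})^{1/2}` is the iterated
positive semidefinite square root.  Consequently, for any matrices `L^{−p}` and `R^{−p}`
(in particular for any inverse real powers of invertible matrices `L`, `R` for which they are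
defined), the Shampoo update decomposes as
`L^{−p} M R^{−p} = [L^{−p}(M Mᵀ)^{1/4}] · U Vᵀ · [(Mᵀ M)^{1/4} R^{−p}]`,
i.e. as the polar factor of `M` multiplied on the left and right by adaptation matrices. -/
theorem statement10 {m n k : ℕ}
    (M : Matrix (Fin m) (Fin n) ℝ)
    (U : Matrix (Fin m) (Fin k) ℝ) (S : Matrix (Fin k) (Fin k) ℝ)
    (V : Matrix (Fin n) (Fin k) ℝ)
    (hU : Uᵀ * U = 1) (hV : Vᵀ * V = 1)
    (hSdiag : ∀ i j, i ≠ j → S i j = 0) (hSpos : ∀ i, 0 < S i i)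
    (hSVD : M = U * S * Vᵀ)
    (hP : (M * Mᵀ).PosSemidef) (hQ : (Mᵀ * M).PosSemidef) :
    hP.posSemidef_sqrt.sqrt * (U * Vᵀ) * hQ.posSemidef_sqrt.sqrt = M ∧
    ∀ (Lp : Matrix (Fin m) (Fin m) ℝ) (Rp : Matrix (Fin n) (Fin n) ℝ),
      Lp * M * Rp =
        (Lp * hP.posSemidef_sqrt.sqrt) * (U * Vᵀ) * (hQ.posSemidef_sqrt.sqrt * Rp) := by
  set A := hP.posSemidef_sqrt.sqrt with hA
  set B := hQ.posSemidef_sqrt.sqrt with hB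
  set d : Fin k → ℝ := fun i => S i i with hdd
  have hd : ∀ i, 0 ≤ d i := fun i => (hSpos i).le
  have hS : S = Matrix.diagonal d := by
    ext i j
    by_cases hij : i = j
    · subst hij; simp [Matrix.diagonal]; rfl
    · simp [Matrix.diagonal, hij, hSdiag i j hij]
  have he : ∀ i, 0 ≤ Real.sqrt (d i) := fun i => Real.sqrt_nonneg _
  have hee : (fun i => Real.sqrt (d i) * Real.sqrt (d i)) = d := by
    ext i; exact Real.mul_self_sqrt (hd i)
  have hMMt : U * Matrix.diagonal (fun i => d i * d i) * Uᵀ = M * Mᵀ := by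
    rw [hSVD, hS, transpose_mul, transpose_mul, transpose_transpose, diagonal_transpose]
    simp only [Matrix.mul_assoc]
    rw [aux_cancel hV, ← Matrix.mul_assoc (Matrix.diagonal d) (Matrix.diagonal d),
      diagonal_mul_diagonal]
  have hMtM : V * Matrix.diagonal (fun i => d i * d i) * Vᵀ = Mᵀ * M := by
    rw [hSVD, hS, transpose_mul, transpose_mul, transpose_transpose, diagonal_transpose]
    simp only [Matrix.mul_assoc]
    rw [aux_cancel hU, ← Matrix.mul_assoc (Matrix.diagonal d) (Matrix.diagonal d),
      diagonal_mul_diagonal]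
  have hsqP : hP.sqrt = U * Matrix.diagonal d * Uᵀ := aux_sqrt U hU d hd hP hMMt
  have hsqQ : hQ.sqrt = V * Matrix.diagonal d * Vᵀ := aux_sqrt V hV d hd hQ hMtM
  have hsqP2 : A = U * Matrix.diagonal (fun i => Real.sqrt (d i)) * Uᵀ := by
    rw [hA]
    apply aux_sqrt U hU _ he
    rw [show (fun i => Real.sqrt (d i) * Real.sqrt (d i)) = d from hee, ← hsqP]
  have hsqQ2 : B = V * Matrix.diagonal (fun i => Real.sqrt (d i)) * Vᵀ := by
    rw [hB]
    apply aux_sqrt V hV _ he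
    rw [show (fun i => Real.sqrt (d i) * Real.sqrt (d i)) = d from hee, ← hsqQ]
  have key : A * (U * Vᵀ) * B = M := by
    rw [hsqP2, hsqQ2, hSVD, hS]
    simp only [Matrix.mul_assoc]
    rw [aux_cancel hU, aux_cancel hV,
      ← Matrix.mul_assoc (Matrix.diagonal _) (Matrix.diagonal _),
      diagonal_mul_diagonal, hee]
  refine ⟨key, fun Lp Rp => ?_⟩
  rw [← key]
  simp only [Matrix.mul_assoc]
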